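/- arXiv:math/0304351 — 2 statements merged into one kernel-verified Lean document; each statement's English description precedes it below -/
import Mathlib

section
/- For u ∈ W^{1,2}(ℝ) and 1 ≤ p < ∞, with a := 1/2 − 1/(p+1), there is a constant C depending only on p such that ‖u‖_{L^{p+1}(ℝ)}^{p+1} ≤ C ‖u'‖_{L²(ℝ)}^{a(p+1)} ‖u‖_{L²(ℝ)}^{(1−a)(p+1)}. -/
open MeasureTheory Set

open Complex
open scoped ENNReal

lemma tri_swap {y x : ℝ} {f g : ℝ → ℂ}
    (hf : IntegrableOn f (Ioc y x)) (hg : IntegrableOn g (Ioc y x)) :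
    ∫ s in Ioc y x, f s * ∫ t in Ioc y s, g t
      = ∫ t in Ioc y x, (∫ s in Ioc t x, f s) * g t := by
  set μ := volume.restrict (Ioc y x) with hμ
  set F : ℝ → ℝ → ℂ := fun s t => {q : ℝ × ℝ | q.2 ≤ q.1}.indicator (fun q => f q.1 * g q.2) (s, t) with hF
  have hmeas : MeasurableSet {q : ℝ × ℝ | q.2 ≤ q.1} :=
    (isClosed_le continuous_snd continuous_fst).measurableSet
  have hFint : Integrable (Function.uncurry F) (μ.prod μ) := by
    have : Function.uncurry F = {q : ℝ × ℝ | q.2 ≤ q.1}.indicator (fun q => f q.1 * g q.2) := rfl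
    rw [this]
    exact (hf.mul_prod hg).indicator hmeas
  have hswap := integral_integral_swap hFint
  have hL : ∫ s, ∫ t, F s t ∂μ ∂μ = ∫ s in Ioc y x, f s * ∫ t in Ioc y s, g t := by
    refine setIntegral_congr_fun measurableSet_Ioc (fun s hs => ?_)
    have h1 : (fun t => F s t) = (Iic s).indicator (fun t => f s * g t) := by
      ext t
      by_cases h : t ≤ s <;> simp [hF, Set.indicator_apply, h]
    rw [h1, integral_indicator measurableSet_Iic, hμ,
      Measure.restrict_restrict measurableSet_Iic]
    have h2 : Iic s ∩ Ioc y x = Ioc y s := by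
      ext t; simp only [mem_inter_iff, mem_Iic, mem_Ioc]
      constructor
      · rintro ⟨h1, h2, h3⟩; exact ⟨h2, h1⟩
      · rintro ⟨h1, h2⟩; exact ⟨h2, h1, h2.trans hs.2⟩
    rw [h2, integral_const_mul]
  have hR : ∫ t, ∫ s, F s t ∂μ ∂μ = ∫ t in Ioc y x, (∫ s in Ioc t x, f s) * g t := by
    refine setIntegral_congr_fun measurableSet_Ioc (fun t ht => ?_)
    have h1 : (fun s => F s t) = (Ici t).indicator (fun s => f s * g t) := by
      ext s
      by_cases h : t ≤ s <;> simp [hF, Set.indicator_apply, h]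
    rw [h1, integral_indicator measurableSet_Ici, hμ,
      Measure.restrict_restrict measurableSet_Ici]
    have h2 : Ici t ∩ Ioc y x = Icc t x := by
      ext s; simp only [mem_inter_iff, mem_Ici, mem_Ioc, mem_Icc]
      constructor
      · rintro ⟨h1, _, h3⟩; exact ⟨h1, h3⟩
      · rintro ⟨h1, h2⟩; exact ⟨h1, ht.1.trans_le h1, h2⟩
    rw [h2, integral_Icc_eq_integral_Ioc, integral_mul_const]
  rw [← hL, ← hR]; exact hswap


lemma integrable_conj' {μ : Measure ℝ} {f : ℝ → ℂ} (h : Integrable f μ) :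
    Integrable (fun s => (starRingEnd ℂ) (f s)) μ := by
  refine h.norm.mono' (Complex.continuous_conj.comp_aestronglyMeasurable h.1) ?_
  filter_upwards with s
  simp

lemma key_ident {u u' : ℝ → ℂ} (hu : ∀ x y : ℝ, u x - u y = ∫ z in y..x, u' z)
    (hc : Continuous u) (hu' : MemLp u' 2 volume) {y x : ℝ} (hyx : y ≤ x) :
    ‖u x‖^2 - ‖u y‖^2 = 2 * ∫ s in Ioc y x, ((starRingEnd ℂ) (u s) * u' s).re := by
  haveI : IsFiniteMeasure (volume.restrict (Ioc y x)) := by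
    constructor
    rw [Measure.restrict_apply_univ, Real.volume_Ioc]
    exact ENNReal.ofReal_lt_top
  have hu'I : IntegrableOn u' (Ioc y x) :=
    (hu'.restrict (Ioc y x)).integrable (by norm_num : (1:ℝ≥0∞) ≤ 2)
  have hF : ∀ s, y ≤ s → u s - u y = ∫ t in Ioc y s, u' t := by
    intro s hs
    rw [← intervalIntegral.integral_of_le hs]
    exact hu s y
  obtain ⟨C, hC⟩ := (isCompact_Icc (a := y) (b := x)).exists_bound_of_continuousOn
    hc.continuousOn
  have hint1 : IntegrableOn (fun s => (starRingEnd ℂ) (u s - u y) * u' s) (Ioc y x) := by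
    refine (hu'I.norm.const_mul (C + ‖u y‖)).mono' ?_ ?_
    · exact (((Complex.continuous_conj.comp (hc.sub continuous_const)).aestronglyMeasurable).mul
        hu'.1).restrict
    · filter_upwards [ae_restrict_mem measurableSet_Ioc] with s hs
      have : ‖u s‖ ≤ C := hC s (Ioc_subset_Icc_self hs)
      calc ‖(starRingEnd ℂ) (u s - u y) * u' s‖ = ‖u s - u y‖ * ‖u' s‖ := by
            rw [norm_mul, RingHomIsometric.norm_map]
        _ ≤ (C + ‖u y‖) * ‖u' s‖ := by
            apply mul_le_mul_of_nonneg_right _ (norm_nonneg _)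
            exact (norm_sub_le _ _).trans (by linarith)
  have hint2 : IntegrableOn (fun s => (starRingEnd ℂ) (u y) * u' s) (Ioc y x) :=
    hu'I.const_mul _
  set D : ℂ := ∫ t in Ioc y x, u' t with hD
  have hDx : u x - u y = D := hF x hyx
  set A : ℂ := ∫ s in Ioc y x, (starRingEnd ℂ) (u s - u y) * u' s with hA
  have hconjA : (starRingEnd ℂ) A = (starRingEnd ℂ) D * D - A := by
    have h1 : (starRingEnd ℂ) A
        = ∫ s in Ioc y x, (fun s => (starRingEnd ℂ) (u' s)) s * ∫ t in Ioc y s, u' t := by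
      rw [hA, ← integral_conj]
      refine setIntegral_congr_fun measurableSet_Ioc (fun s hs => ?_)
      simp only [map_mul, RingHomCompTriple.comp_apply, RingHom.id_apply, starRingEnd_self_apply]
      rw [← hF s hs.1.le]
      ring
    rw [h1, tri_swap (integrable_conj' hu'I) hu'I]
    have h2 : ∀ t ∈ Ioc y x, (∫ s in Ioc t x, (starRingEnd ℂ) (u' s)) * u' t
        = (starRingEnd ℂ) D * u' t - (starRingEnd ℂ) (u t - u y) * u' t := by
      intro t ht
      rw [integral_conj]
      have e1 : ∫ s in Ioc t x, u' s = u x - u t := by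
        rw [← intervalIntegral.integral_of_le ht.2, ← hu x t]
      have e2 : u x - u t = D - (u t - u y) := by rw [← hDx]; ring
      rw [e1, e2, map_sub]
      ring
    have hint2' : IntegrableOn (fun t => (starRingEnd ℂ) D * u' t) (Ioc y x) :=
      hu'I.const_mul _
    rw [setIntegral_congr_fun measurableSet_Ioc h2, integral_sub hint2' hint1,
      integral_const_mul, ← hA]
  -- 2 * A.re = normSq D
  have h2re : 2 * A.re = Complex.normSq D := by
    have := Complex.add_conj A
    rw [hconjA] at this
    have h3 : A + ((starRingEnd ℂ) D * D - A) = ((Complex.normSq D : ℝ) : ℂ) := by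
      rw [mul_comm, Complex.mul_conj]; ring
    rw [h3] at this
    exact_mod_cast this.symm
  -- main integral computation
  have hintU : IntegrableOn (fun s => (starRingEnd ℂ) (u s) * u' s) (Ioc y x) := by
    refine (hint2.add hint1).congr (Filter.Eventually.of_forall fun s => ?_)
    simp only [Pi.add_apply, map_sub]
    ring
  have hsplit : ∫ s in Ioc y x, (starRingEnd ℂ) (u s) * u' s
      = (starRingEnd ℂ) (u y) * D + A := by
    have : ∀ s ∈ Ioc y x, (starRingEnd ℂ) (u s) * u' s
        = (starRingEnd ℂ) (u y) * u' s + (starRingEnd ℂ) (u s - u y) * u' s := by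
      intro s hs
      simp only [map_sub]
      ring
    rw [setIntegral_congr_fun measurableSet_Ioc this, integral_add hint2 hint1,
      integral_const_mul, ← hA, ← hD]
  have hre : ∫ s in Ioc y x, ((starRingEnd ℂ) (u s) * u' s).re
      = ((starRingEnd ℂ) (u y) * D + A).re := by
    rw [← hsplit]
    exact integral_re hintU
  rw [hre]
  -- norms to normSq
  have hux : u x = u y + D := by rw [← hDx]; ring
  have e1 : ‖u x‖^2 = Complex.normSq (u y + D) := by
    rw [hux, ← Complex.sq_norm]
  have e2 : ‖u y‖^2 = Complex.normSq (u y) := by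
    rw [← Complex.sq_norm]
  rw [e1, e2, Complex.normSq_add]
  have e3 : (u y * (starRingEnd ℂ) D).re = ((starRingEnd ℂ) (u y) * D).re := by
    simp [Complex.mul_re, Complex.conj_re, Complex.conj_im]
  simp only [Complex.add_re]
  rw [e3] at *
  linarith

lemma sq_norm_integrable {f : ℝ → ℂ} (hf : MemLp f 2 volume) :
    Integrable (fun z => ‖f z‖^2) := by
  have := hf.integrable_norm_rpow two_ne_zero ENNReal.ofNat_ne_top
  simpa [ENNReal.toReal_ofNat, Real.rpow_natCast] using this

lemma prod_norm_integrable {u u' : ℝ → ℂ} (hu2 : MemLp u 2 volume)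
    (hu'2 : MemLp u' 2 volume) :
    Integrable (fun z => ‖u z‖ * ‖u' z‖) := by
  refine (((sq_norm_integrable hu2).add (sq_norm_integrable hu'2)).div_const 2).mono'
    (hu2.1.norm.mul hu'2.1.norm) ?_
  filter_upwards with z
  rw [Real.norm_of_nonneg (mul_nonneg (norm_nonneg _) (norm_nonneg _))]
  simp only [Pi.add_apply]
  nlinarith [sq_nonneg (‖u z‖ - ‖u' z‖)]

lemma sq_le_key {u u' : ℝ → ℂ} (hu : ∀ x y : ℝ, u x - u y = ∫ z in y..x, u' z)
    (hc : Continuous u) (hu2 : MemLp u 2 volume) (hu'2 : MemLp u' 2 volume) (x : ℝ) :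
    ‖u x‖^2 ≤ 2 * ∫ z, ‖u z‖ * ‖u' z‖ := by
  have hprod := prod_norm_integrable hu2 hu'2
  have hI2 := sq_norm_integrable hu2
  refine le_of_forall_pos_le_add fun ε hε => ?_
  -- find y ≤ x with ‖u y‖^2 < ε
  have hy : ∃ y ≤ x, ‖u y‖^2 < ε := by
    by_contra hcon
    push_neg at hcon
    have hconst : Integrable (fun _ : ℝ => ε) (volume.restrict (Iic x)) := by
      refine (hI2.restrict (s := Iic x)).mono' aestronglyMeasurable_const ?_
      filter_upwards [ae_restrict_mem measurableSet_Iic] with z hz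
      rw [Real.norm_of_nonneg hε.le]
      exact hcon z hz
    rw [integrable_const_iff] at hconst
    rcases hconst with h | h
    · exact hε.ne' h
    · have h := h.measure_univ_lt_top; rw [Measure.restrict_apply_univ, Real.volume_Iic] at h
      exact (lt_irrefl _ h).elim
  obtain ⟨y, hyx, hysmall⟩ := hy
  have hkey := key_ident hu hc hu'2 hyx
  -- bound the integral
  have hintre : IntegrableOn (fun s => ((starRingEnd ℂ) (u s) * u' s).re) (Ioc y x) := by
    refine (hprod.restrict (s := Ioc y x)).mono'
      (Complex.continuous_re.comp_aestronglyMeasurable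
        (((Complex.continuous_conj.comp hc).aestronglyMeasurable.mul hu'2.1).restrict)) ?_
    filter_upwards with s
    calc ‖((starRingEnd ℂ) (u s) * u' s).re‖ ≤ ‖(starRingEnd ℂ) (u s) * u' s‖ :=
          Complex.abs_re_le_norm _
      _ = ‖u s‖ * ‖u' s‖ := by rw [norm_mul, RingHomIsometric.norm_map]
  have hb1 : ∫ s in Ioc y x, ((starRingEnd ℂ) (u s) * u' s).re
      ≤ ∫ s in Ioc y x, ‖u s‖ * ‖u' s‖ := by
    refine integral_mono hintre (hprod.restrict) fun s => ?_
    calc ((starRingEnd ℂ) (u s) * u' s).re ≤ ‖(starRingEnd ℂ) (u s) * u' s‖ :=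
          Complex.re_le_norm _
      _ = ‖u s‖ * ‖u' s‖ := by rw [norm_mul, RingHomIsometric.norm_map]
  have hb2 : ∫ s in Ioc y x, ‖u s‖ * ‖u' s‖ ≤ ∫ z, ‖u z‖ * ‖u' z‖ := by
    refine setIntegral_le_integral hprod ?_
    filter_upwards with z
    exact mul_nonneg (norm_nonneg _) (norm_nonneg _)
  nlinarith

/-- One-dimensional Gagliardo–Nirenberg inequality on `ℝ`: for `1 ≤ p < ∞` and
`a := 1/2 - 1/(p+1)`, there is `C > 0` depending only on `p` such that for all
`u ∈ W^{1,2}(ℝ)` (encoded via the FTC characterization with weak derivative `u'`):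
`‖u‖_{L^{p+1}}^{p+1} ≤ C ‖u'‖_{L²}^{a(p+1)} ‖u‖_{L²}^{(1-a)(p+1)}`. -/
theorem stmt_6 (p : ℝ) (hp : 1 ≤ p) :
    ∃ C > (0:ℝ), ∀ u u' : ℝ → ℂ,
      (∀ x y : ℝ, u x - u y = ∫ z in y..x, u' z) →
      Continuous u →
      MemLp u 2 volume →
      MemLp u' 2 volume →
      (∫ x : ℝ, ‖u x‖ ^ (p+1))
        ≤ C * (∫ x : ℝ, ‖u' x‖^2) ^ ((1/2 - 1/(p+1)) * (p+1) / 2)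
            * (∫ x : ℝ, ‖u x‖^2) ^ ((1 - (1/2 - 1/(p+1))) * (p+1) / 2) := by
  have hp1 : p + 1 ≠ 0 := by linarith
  refine ⟨2 ^ ((p-1)/2), Real.rpow_pos_of_pos two_pos _, fun u u' hu hc hu2 hu'2 => ?_⟩
  rw [show (1/2 - 1/(p+1)) * (p+1) / 2 = (p-1)/4 by field_simp; ring,
      show (1 - (1/2 - 1/(p+1))) * (p+1) / 2 = (p+3)/4 by field_simp; ring]
  set I := ∫ x : ℝ, ‖u x‖^2 with hIdef
  set J := ∫ x : ℝ, ‖u' x‖^2 with hJdef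
  have hI0 : 0 ≤ I := integral_nonneg fun x => sq_nonneg _
  have hJ0 : 0 ≤ J := integral_nonneg fun x => sq_nonneg _
  -- Cauchy-Schwarz
  have hCS : ∫ z, ‖u z‖ * ‖u' z‖ ≤ I ^ (1/2:ℝ) * J ^ (1/2:ℝ) := by
    have hconj : Real.HolderConjugate 2 2 := Real.HolderConjugate.two_two
    have h2 : ENNReal.ofReal (2:ℝ) = 2 := by norm_num
    have hH := integral_mul_le_Lp_mul_Lq_of_nonneg (μ := volume) hconj
      (f := fun z => ‖u z‖) (g := fun z => ‖u' z‖)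
      (Filter.Eventually.of_forall fun z => norm_nonneg _)
      (Filter.Eventually.of_forall fun z => norm_nonneg _)
      (by rw [h2]; exact hu2.norm) (by rw [h2]; exact hu'2.norm)
    calc ∫ z, ‖u z‖ * ‖u' z‖
        ≤ (∫ z, ‖u z‖ ^ (2:ℝ)) ^ ((1:ℝ)/2) * (∫ z, ‖u' z‖ ^ (2:ℝ)) ^ ((1:ℝ)/2) := hH
      _ = I ^ (1/2:ℝ) * J ^ (1/2:ℝ) := by
          rw [hIdef, hJdef]
          norm_num [show ∀ t:ℝ, t ^ (2:ℝ) = t^2 from fun t => by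
            rw [show (2:ℝ) = ((2:ℕ):ℝ) by norm_num, Real.rpow_natCast]]
  set K := 2 * (I ^ (1/2:ℝ) * J ^ (1/2:ℝ)) with hKdef
  have hK0 : 0 ≤ K := by positivity
  have hpt : ∀ x, ‖u x‖^2 ≤ K :=
    fun x => (sq_le_key hu hc hu2 hu'2 x).trans (by linarith [hCS])
  have hq0 : (0:ℝ) ≤ (p-1)/2 := by linarith
  -- pointwise bound
  have hptw : ∀ x, ‖u x‖ ^ (p+1) ≤ K ^ ((p-1)/2) * ‖u x‖^2 := by
    intro x
    set t := ‖u x‖ with ht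
    have ht0 : (0:ℝ) ≤ t := norm_nonneg _
    have e1 : t ^ (p+1) = t ^ (p-1) * t ^ 2 := by
      rw [show p+1 = (p-1)+2 by ring, Real.rpow_add' ht0 (by intro h; nlinarith),
        show ((2:ℝ)) = ((2:ℕ):ℝ) by norm_num, Real.rpow_natCast]
    have e2 : t ^ (p-1) = (t^2 : ℝ) ^ ((p-1)/2) := by
      rw [← Real.rpow_natCast t 2, ← Real.rpow_mul ht0]
      congr 1
      push_cast
      ring
    rw [e1, e2]
    refine mul_le_mul_of_nonneg_right ?_ (sq_nonneg t)
    exact Real.rpow_le_rpow (sq_nonneg t) (hpt x) hq0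
  -- integrate
  have hmain : (∫ x : ℝ, ‖u x‖ ^ (p+1)) ≤ K ^ ((p-1)/2) * I := by
    calc (∫ x : ℝ, ‖u x‖ ^ (p+1)) ≤ ∫ x : ℝ, K ^ ((p-1)/2) * ‖u x‖^2 := by
          refine integral_mono_of_nonneg
            (Filter.Eventually.of_forall fun x => Real.rpow_nonneg (norm_nonneg _) _)
            ((sq_norm_integrable hu2).const_mul _)
            (Filter.Eventually.of_forall hptw)
      _ = K ^ ((p-1)/2) * I := by rw [integral_const_mul, hIdef]
  refine hmain.trans (le_of_eq ?_)
  rw [hKdef, Real.mul_rpow (by norm_num)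
      (mul_nonneg (Real.rpow_nonneg hI0 _) (Real.rpow_nonneg hJ0 _)),
    Real.mul_rpow (Real.rpow_nonneg hI0 _) (Real.rpow_nonneg hJ0 _),
    ← Real.rpow_mul hI0, ← Real.rpow_mul hJ0,
    show (1/2:ℝ) * ((p-1)/2) = (p-1)/4 by ring]
  have e3 : I ^ ((p-1)/4 : ℝ) * I = I ^ ((p+3)/4 : ℝ) := by
    calc I ^ ((p-1)/4:ℝ) * I = I ^ ((p-1)/4:ℝ) * I ^ (1:ℝ) := by rw [Real.rpow_one]
      _ = I ^ ((p-1)/4 + 1 : ℝ) := (Real.rpow_add' hI0 (by intro h; nlinarith)).symm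
      _ = I ^ ((p+3)/4 : ℝ) := by rw [show (p-1)/4 + 1 = (p+3)/4 by ring]
  calc 2 ^ ((p-1)/2) * (I ^ ((p-1)/4:ℝ) * J ^ ((p-1)/4:ℝ)) * I
      = 2 ^ ((p-1)/2) * J ^ ((p-1)/4:ℝ) * (I ^ ((p-1)/4:ℝ) * I) := by ring
    _ = 2 ^ ((p-1)/2) * J ^ ((p-1)/4) * I ^ ((p+3)/4) := by rw [e3]
end

section
/- Let h : ℂ → ℝ be C¹ in the real sense with h(0) = 0, and define F(z) := 2 ∂h/∂z̄ (z), where ∂/∂z̄ = (1/2)(∂/∂a + i ∂/∂b) for z = a + ib. Then the sign condition Im( \overline{z} F(z) ) = 0 for all z ∈ ℂ holds if and only if h depends only on |z|, i.e., h(z) = h(|z|) (equivalently h(e^{iθ}z) = h(z) for all θ ∈ ℝ, z ∈ ℂ). -/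
open Complex

lemma stmt_19_key (D : ℂ →L[ℝ] ℝ) (w : ℂ) :
    ((starRingEnd ℂ) w * ((D 1 : ℂ) + (D Complex.I : ℂ) * Complex.I)).im
      = D (Complex.I * w) := by
  have hw : Complex.I * w = w.re • Complex.I + (-w.im) • (1 : ℂ) := by
    apply Complex.ext <;> simp
  rw [hw, map_add, map_smul, map_smul]
  simp [Complex.mul_im]

lemma stmt_19_deriv (h : ℂ → ℝ) (hC1 : ContDiff ℝ 1 h) (z : ℂ) (θ : ℝ) :
    HasDerivAt (fun t : ℝ => h (Complex.exp (t * Complex.I) * z))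
      (fderiv ℝ h (Complex.exp (θ * Complex.I) * z)
        (Complex.I * (Complex.exp (θ * Complex.I) * z))) θ := by
  have h1 : HasDerivAt (fun t : ℝ => (t : ℂ) * Complex.I) Complex.I θ := by
    simpa using (Complex.ofRealCLM.hasDerivAt (x := θ)).mul_const Complex.I
  have h2 : HasDerivAt (fun t : ℝ => Complex.exp (t * Complex.I) * z)
      (Complex.exp (θ * Complex.I) * Complex.I * z) θ := (h1.cexp).mul_const z
  have hd := (hC1.differentiable one_ne_zero (Complex.exp (θ * Complex.I) * z)).hasFDerivAt
  have := hd.comp_hasDerivAt θ h2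
  rw [show Complex.I * (Complex.exp (θ * Complex.I) * z) = Complex.exp (θ * Complex.I) * Complex.I * z by ring]
  exact this

/-- Let `h : ℂ → ℝ` be `C¹` in the real sense with `h(0) = 0`, and let
`F(z) := 2 ∂h/∂z̄(z) = ∂h/∂a(z) + i ∂h/∂b(z)` (Wirtinger derivative, expressed via the real
Fréchet derivative of `h` in the directions `1` and `i`). Then the sign condition
`Im(z̄ F(z)) = 0` for all `z` holds if and only if `h` is rotation-invariant, i.e.
`h(e^{iθ} z) = h(z)` for all `θ ∈ ℝ`, `z ∈ ℂ` (equivalently `h` depends only on `|z|`). -/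
theorem stmt_19 (h : ℂ → ℝ) (hC1 : ContDiff ℝ 1 h) (h0 : h 0 = 0) :
    (∀ z : ℂ,
      ((starRingEnd ℂ) z *
        (((fderiv ℝ h z) 1 : ℂ) + ((fderiv ℝ h z) Complex.I : ℂ) * Complex.I)).im = 0)
    ↔ (∀ θ : ℝ, ∀ z : ℂ, h (Complex.exp (θ * Complex.I) * z) = h z) := by
  constructor
  · intro hsign θ z
    have hder : ∀ t : ℝ, HasDerivAt (fun t : ℝ => h (Complex.exp (t * Complex.I) * z)) 0 t := by
      intro t
      have := stmt_19_deriv h hC1 z t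
      have h0' : fderiv ℝ h (Complex.exp (t * Complex.I) * z)
          (Complex.I * (Complex.exp (t * Complex.I) * z)) = 0 := by
        rw [← stmt_19_key]
        exact hsign _
      rwa [h0'] at this
    have hconst := is_const_of_deriv_eq_zero (f := fun t : ℝ => h (Complex.exp (t * Complex.I) * z))
      (fun t => (hder t).differentiableAt) (fun t => (hder t).deriv) θ 0
    simpa using hconst
  · intro hinv z
    have heq : (fun t : ℝ => h (Complex.exp (t * Complex.I) * z)) = fun _ => h z :=
      funext fun t => hinv t z
    have h1 := stmt_19_deriv h hC1 z 0
    rw [heq] at h1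
    have h2 : HasDerivAt (fun _ : ℝ => h z) (0 : ℝ) 0 := hasDerivAt_const _ _
    have := h1.unique h2
    simp only [Complex.ofReal_zero, zero_mul, Complex.exp_zero, one_mul] at this
    rw [stmt_19_key]
    simpa using this
end
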